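/- (Theorem 4.2, direction 1 ⇒ 2, abstracted): Suppose π is the outcome path of a Nash equilibrium σ from state s₀ in a mean-payoff game, and for each player i define z_i as the supremum over deviation points k and deviating actions a'_i of pun_i(tr(s_k,(a_{-i}^k, a'_i))), where pun_i(s) is the maximal payoff i can guarantee from s against adversarial opponents. Then z_i ≤ pay_i(π) for every player i. -/
import Mathlib


open Filter

/-- Mean payoff: the liminf of running averages. -/
noncomputable def MP (r : ℕ → ℝ) : ℝ :=
  Filter.liminf (fun n => (∑ j ∈ Finset.range n, r j) / n) Filter.atTop

/-- A strategy: a choice of action given the history of past action profiles. -/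
abbrev Strat (N Ac : Type) := List (N → Ac) → Ac

/-- The list of the first `n` action profiles generated by the profile `σ`. -/
def histActs {N Ac : Type} (σ : N → Strat N Ac) : ℕ → List (N → Ac)
  | 0 => []
  | n + 1 => histActs σ n ++ [fun i => σ i (histActs σ n)]

/-- The action profile played at step `n`. -/
def actsAt {N Ac : Type} (σ : N → Strat N Ac) (n : ℕ) : N → Ac :=
  fun i => σ i (histActs σ n)

/-- The state reached at step `n` from `s0` under profile `σ`. -/
def stateAt {N St Ac : Type} (tr : St → (N → Ac) → St) (σ : N → Strat N Ac)
    (s0 : St) : ℕ → St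
  | 0 => s0
  | n + 1 => tr (stateAt tr σ s0 n) (actsAt σ n)

/-- Player `i`'s mean payoff under profile `σ` from `s0`, for weights `w`. -/
noncomputable def pay {N St Ac : Type} (w : N → St → ℤ) (tr : St → (N → Ac) → St)
    (σ : N → Strat N Ac) (s0 : St) (i : N) : ℝ :=
  MP (fun n => (w i (stateAt tr σ s0 n) : ℝ))

/-- Nash equilibrium: no unilateral deviation strictly increases a payoff. -/
def NE {N St Ac : Type} [DecidableEq N] (w : N → St → ℤ) (tr : St → (N → Ac) → St)
    (σ : N → Strat N Ac) (s0 : St) : Prop :=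
  ∀ i (σ' : Strat N Ac), pay w tr (Function.update σ i σ') s0 i ≤ pay w tr σ s0 i


lemma avg_abs_le (f : ℕ → ℝ) (C : ℝ) (hC : ∀ n, |f n| ≤ C) (n : ℕ) :
    |(∑ j ∈ Finset.range n, f j) / (n : ℝ)| ≤ C := by
  have hC0 : 0 ≤ C := le_trans (abs_nonneg _) (hC 0)
  rcases Nat.eq_zero_or_pos n with h | h
  · simp [h, hC0]
  · have hn : (0:ℝ) < n := by exact_mod_cast h
    rw [abs_div, abs_of_pos hn, div_le_iff₀ hn]
    calc |∑ j ∈ Finset.range n, f j| ≤ ∑ j ∈ Finset.range n, |f j| :=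
          Finset.abs_sum_le_sum_abs _ _
      _ ≤ ∑ _j ∈ Finset.range n, C := Finset.sum_le_sum fun j _ => hC j
      _ = C * n := by simp [mul_comm]

lemma liminf_eq_of_sub (u v : ℕ → ℝ) (C : ℝ) (hu : ∀ n, |u n| ≤ C) (hv : ∀ n, |v n| ≤ C)
    (h : Filter.Tendsto (fun n => u n - v n) Filter.atTop (nhds 0)) :
    Filter.liminf u Filter.atTop = Filter.liminf v Filter.atTop := by
  have key : ∀ (u v : ℕ → ℝ), (∀ n, |u n| ≤ C) → (∀ n, |v n| ≤ C) →
      Filter.Tendsto (fun n => u n - v n) Filter.atTop (nhds 0) →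
      Filter.liminf u Filter.atTop ≤ Filter.liminf v Filter.atTop := by
    intro u v hu hv h
    have hvb : IsBoundedUnder (· ≥ ·) atTop v :=
      isBoundedUnder_of ⟨-C, fun n => neg_le_of_abs_le (hv n)⟩
    have hvub : IsBoundedUnder (· ≤ ·) atTop v :=
      isBoundedUnder_of ⟨C, fun n => le_of_abs_le (hv n)⟩
    have hvcob : IsCoboundedUnder (· ≥ ·) atTop v :=
      hvub.isCoboundedUnder_ge
    have hub : IsBoundedUnder (· ≥ ·) atTop u :=
      isBoundedUnder_of ⟨-C, fun n => neg_le_of_abs_le (hu n)⟩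
    refine le_of_forall_pos_le_add fun ε hε => ?_
    have h1 : ∀ᶠ n in atTop, u n - v n < ε := h.eventually (gt_mem_nhds hε)
    have h2 : ∀ᶠ n in atTop, u n ≤ v n + ε := h1.mono fun n hn => by linarith
    calc Filter.liminf u Filter.atTop
        ≤ Filter.liminf (fun n => v n + ε) Filter.atTop := by
          refine liminf_le_liminf h2 hub ?_
          exact IsBoundedUnder.isCoboundedUnder_ge
            (isBoundedUnder_of ⟨C + ε, fun n => by
              have := le_of_abs_le (hv n); linarith⟩)
      _ = Filter.liminf v Filter.atTop + ε :=
          liminf_add_const atTop v ε hvcob hvb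
  refine le_antisymm (key u v hu hv h) (key v u hv hu ?_)
  have := h.neg
  simpa using this

lemma MP_shift (f : ℕ → ℝ) (C : ℝ) (hC : ∀ n, |f n| ≤ C) (m : ℕ) :
    MP (fun n => f (n + m)) = MP f := by
  set A : ℕ → ℝ := fun n => (∑ j ∈ Finset.range n, f j) / n with hA
  set B : ℕ → ℝ := fun n => (∑ j ∈ Finset.range n, f (j + m)) / n with hB
  have hAb : ∀ n, |A n| ≤ C := fun n => avg_abs_le f C hC n
  have hBb : ∀ n, |B n| ≤ C := fun n => avg_abs_le (fun j => f (j + m)) C (fun j => hC _) n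
  set S : ℝ := ∑ j ∈ Finset.range m, f j with hS
  have hsum : ∀ n, ∑ j ∈ Finset.range n, f (j + m)
      = (∑ j ∈ Finset.range (n + m), f j) - S := by
    intro n
    rw [hS, add_comm n m, Finset.sum_range_add]
    simp [add_comm]
  have hdiff : ∀ n : ℕ, 1 ≤ n → B n - A (n + m) = ((m : ℝ) * A (n + m) - S) / n := by
    intro n hn
    have hn0 : (n : ℝ) ≠ 0 := by positivity
    have hnm0 : ((n : ℝ) + m) ≠ 0 := by positivity
    have hAnm : A (n + m) = (∑ j ∈ Finset.range (n + m), f j) / ((n : ℝ) + m) := by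
      simp [hA]
    have : ∑ j ∈ Finset.range (n + m), f j = ((n : ℝ) + m) * A (n + m) := by
      rw [hAnm]; field_simp
    simp only [hB, hsum n, this]
    field_simp
    ring
  have htend : Filter.Tendsto (fun n => B n - A (n + m)) Filter.atTop (nhds 0) := by
    apply squeeze_zero_norm' (a := fun n : ℕ => ((m : ℝ) * C + |S|) / n)
    · filter_upwards [Filter.eventually_ge_atTop 1] with n hn
      rw [hdiff n hn]
      have hn0 : (0:ℝ) < n := by exact_mod_cast hn
      rw [Real.norm_eq_abs, abs_div, abs_of_pos hn0, div_le_div_iff_of_pos_right ?pos]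
      case pos => exact hn0
      calc |(m : ℝ) * A (n + m) - S| ≤ |(m : ℝ) * A (n + m)| + |S| := abs_sub _ _
        _ ≤ (m : ℝ) * C + |S| := by
            have : |(m : ℝ) * A (n + m)| = (m : ℝ) * |A (n + m)| := by
              rw [abs_mul, abs_of_nonneg (by positivity)]
            rw [this]
            have := hAb (n + m)
            nlinarith [Nat.cast_nonneg (α := ℝ) m]
    · exact tendsto_const_div_atTop_nhds_zero_nat _
  have h1 : Filter.liminf B Filter.atTop = Filter.liminf (fun n => A (n + m)) Filter.atTop :=
    liminf_eq_of_sub B (fun n => A (n + m)) C hBb (fun n => hAb _) htend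
  have h2 : Filter.liminf (fun n => A (n + m)) Filter.atTop = Filter.liminf A Filter.atTop :=
    Filter.liminf_nat_add A m
  show Filter.liminf B Filter.atTop = Filter.liminf A Filter.atTop
  rw [h1, h2]

lemma histActs_length {N Ac : Type} (σ : N → Strat N Ac) (n : ℕ) :
    (histActs σ n).length = n := by
  induction n with
  | zero => rfl
  | succ n ih => simp [histActs, ih]



/-- Theorem 4.2, direction (1) ⇒ (2), abstracted. Let `π` be the outcome path of
a Nash equilibrium `σ` from `s₀` in a mean-payoff game on a finite set of
states, and let `pun i s` be a payoff that player `i` can guarantee from `s`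
against adversarial opponents. Then for every player `i`, every deviation point
`k`, and every deviating action `a'`, the punishment value of the state reached
by the deviation is at most `pay_i(π)`; i.e. `z_i ≤ pay_i(π)` where `z_i` is
the supremum of these punishment values. -/
theorem NE_implies_punishment_le_pay {N St Ac : Type} [DecidableEq N] [Fintype St]
    (w : N → St → ℤ) (tr : St → (N → Ac) → St) (σ : N → Strat N Ac) (s0 : St)
    (pun : N → St → ℝ)
    (hpun : ∀ i s, ∃ τi : Strat N Ac, ∀ τ : N → Strat N Ac,
      pun i s ≤ pay w tr (Function.update τ i τi) s i)
    (hNE : NE w tr σ s0) :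
    ∀ (i : N) (k : ℕ) (a' : Ac),
      pun i (tr (stateAt tr σ s0 k) (Function.update (actsAt σ k) i a')) ≤
        pay w tr σ s0 i := by
  intro i k a'
  set s' : St := tr (stateAt tr σ s0 k) (Function.update (actsAt σ k) i a') with hs'
  obtain ⟨τi, hτi⟩ := hpun i s'
  set P : List (N → Ac) := histActs σ k ++ [Function.update (actsAt σ k) i a'] with hP
  have hPlen : P.length = k + 1 := by simp [hP, histActs_length]
  set τ : N → Strat N Ac := fun j h => σ j (P ++ h) with hτ
  set σi : Strat N Ac := fun h =>
    if h.length < k then σ i h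
    else if h.length = k then a'
    else τi (h.drop (k + 1)) with hσi
  set μ : N → Strat N Ac := Function.update σ i σi with hμ
  set ρ : N → Strat N Ac := Function.update τ i τi with hρ
  have hμi : ∀ l, μ i l = σi l := fun l => by rw [hμ, Function.update_self]
  have hμj : ∀ j, j ≠ i → ∀ l, μ j l = σ j l := fun j hj l => by
    rw [hμ, Function.update_of_ne hj]
  have hρi : ∀ l, ρ i l = τi l := fun l => by rw [hρ, Function.update_self]
  have hρj : ∀ j, j ≠ i → ∀ l, ρ j l = τ j l := fun j hj l => by
    rw [hρ, Function.update_of_ne hj]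
  have hσiv : ∀ l : List (N → Ac), σi l =
      if l.length < k then σ i l else if l.length = k then a' else τi (l.drop (k + 1)) :=
    fun l => by rw [hσi]
  have hτv : ∀ j (l : List (N → Ac)), τ j l = σ j (P ++ l) := fun j l => by rw [hτ]
  -- μ agrees with σ on short histories
  have hagree : ∀ n, n < k → ∀ j, μ j (histActs σ n) = σ j (histActs σ n) := by
    intro n hn j
    by_cases hj : j = i
    · subst hj
      rw [hμi, hσiv, histActs_length, if_pos hn]
    · rw [hμj j hj]
  have H1 : ∀ n, n ≤ k → histActs μ n = histActs σ n := by
    intro n hn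
    induction n with
    | zero => rfl
    | succ n ih =>
      have hn' : n ≤ k := Nat.le_of_succ_le hn
      show histActs μ n ++ [fun j => μ j (histActs μ n)] =
           histActs σ n ++ [fun j => σ j (histActs σ n)]
      rw [ih hn']
      have : (fun j => μ j (histActs σ n)) = fun j => σ j (histActs σ n) :=
        funext (hagree n (Nat.lt_of_succ_le hn))
      rw [this]
  have H2 : ∀ j, μ j (histActs σ k) = Function.update (actsAt σ k) i a' j := by
    intro j
    by_cases hj : j = i
    · subst hj
      rw [hμi, hσiv, histActs_length, if_neg (lt_irrefl k), if_pos rfl,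
        Function.update_self]
    · rw [hμj j hj, Function.update_of_ne hj]
      rfl
  have H1s : ∀ n, n ≤ k → stateAt tr μ s0 n = stateAt tr σ s0 n := by
    intro n hn
    induction n with
    | zero => rfl
    | succ n ih =>
      have hn' : n ≤ k := Nat.le_of_succ_le hn
      show tr (stateAt tr μ s0 n) (actsAt μ n) = tr (stateAt tr σ s0 n) (actsAt σ n)
      rw [ih hn']
      congr 1
      funext j
      show μ j (histActs μ n) = σ j (histActs σ n)
      rw [H1 n hn']
      exact hagree n (Nat.lt_of_succ_le hn) j
  have hkey : ∀ n j, μ j (P ++ histActs ρ n) = ρ j (histActs ρ n) := by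
    intro n j
    by_cases hj : j = i
    · subst hj
      rw [hμi, hρi, hσiv]
      have hl : (P ++ histActs ρ n).length = k + 1 + n := by
        rw [List.length_append, hPlen, histActs_length]
      rw [hl, if_neg (by omega), if_neg (by omega)]
      congr 1
      rw [← hPlen, List.drop_left]
    · rw [hμj j hj, hρj j hj, hτv]
  have H4 : ∀ n, histActs μ (k + 1 + n) = P ++ histActs ρ n := by
    intro n
    induction n with
    | zero =>
      show histActs μ k ++ [fun j => μ j (histActs μ k)] = P ++ histActs ρ 0
      rw [H1 k le_rfl]
      have h0 : histActs ρ 0 = [] := rfl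
      rw [h0, List.append_nil]
      have : (fun j => μ j (histActs σ k)) = Function.update (actsAt σ k) i a' :=
        funext H2
      rw [this, hP]
    | succ n ih =>
      show histActs μ (k + 1 + n) ++ [fun j => μ j (histActs μ (k + 1 + n))] =
        P ++ histActs ρ (n + 1)
      rw [ih]
      have : (fun j => μ j (P ++ histActs ρ n)) = fun j => ρ j (histActs ρ n) :=
        funext (hkey n)
      rw [this, List.append_assoc]
      rfl
  have H5 : ∀ n, stateAt tr μ s0 (k + 1 + n) = stateAt tr ρ s' n := by
    intro n
    induction n with
    | zero =>
      show tr (stateAt tr μ s0 k) (actsAt μ k) = s'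
      rw [H1s k le_rfl, hs']
      congr 1
      funext j
      show μ j (histActs μ k) = Function.update (actsAt σ k) i a' j
      rw [H1 k le_rfl]
      exact H2 j
    | succ n ih =>
      show tr (stateAt tr μ s0 (k + 1 + n)) (actsAt μ (k + 1 + n)) =
        tr (stateAt tr ρ s' n) (actsAt ρ n)
      rw [ih]
      congr 1
      funext j
      show μ j (histActs μ (k + 1 + n)) = ρ j (histActs ρ n)
      rw [H4 n]
      exact hkey n j
  -- payoff comparison via shift invariance
  obtain ⟨C, hC⟩ : ∃ C : ℝ, ∀ s : St, |(w i s : ℝ)| ≤ C :=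
    Finite.exists_le fun s : St => |(w i s : ℝ)|
  have hpayeq : pay w tr ρ s' i = pay w tr μ s0 i := by
    unfold pay
    have : (fun n => (w i (stateAt tr ρ s' n) : ℝ)) =
        fun n => (w i (stateAt tr μ s0 (n + (k + 1))) : ℝ) := by
      funext n
      rw [show n + (k + 1) = k + 1 + n by omega, H5 n]
    rw [this]
    exact MP_shift (fun n => (w i (stateAt tr μ s0 n) : ℝ)) C (fun n => hC _) (k + 1)
  calc pun i s' ≤ pay w tr (Function.update τ i τi) s' i := hτi τ
    _ = pay w tr μ s0 i := by
        rw [show Function.update τ i τi = ρ from hρ.symm]; exact hpayeq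
    _ ≤ pay w tr σ s0 i := by
        have := hNE i σi
        rwa [← hμ] at this
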